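/- arXiv:1812.08809 — 8 statements merged into one kernel-verified Lean document; each statement's English description precedes it below -/
import Mathlib

section
/- If T and all H_1, ..., H_t are strong digraphs, each of order at least 2, and t ≥ 2, then the composition Q = T[H_1, ..., H_t] has a pair of arc-disjoint strong spanning subdigraphs. -/
/-- A digraph (given by its arc relation) is strong (strongly connected). -/
def IsStrong {V : Type*} (A : V → V → Prop) : Prop :=
  ∀ x y : V, Relation.ReflTransGen A x y

/-- `A` has a pair of arc-disjoint strong spanning subdigraphs (a good decomposition). -/
def GoodDecomp {V : Type*} (A : V → V → Prop) : Prop :=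
  ∃ A₁ A₂ : V → V → Prop,
    (∀ x y, A₁ x y → A x y) ∧ (∀ x y, A₂ x y → A x y) ∧
    (∀ x y, ¬ (A₁ x y ∧ A₂ x y)) ∧ IsStrong A₁ ∧ IsStrong A₂

/-- Arc relation of the composition `T[H_1, ..., H_t]`. -/
def CompArc {t : ℕ} {Vt : Fin t → Type*} (T : Fin t → Fin t → Prop)
    (H : ∀ i, Vt i → Vt i → Prop) : (Σ i, Vt i) → (Σ i, Vt i) → Prop :=
  fun a b => T a.1 b.1 ∨ ∃ h : a.1 = b.1, H b.1 (h ▸ a.2) b.2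


/-- The cyclic successor on `Fin n`. -/
def finSucc {n : ℕ} (x : Fin n) : Fin n := ⟨(x.val + 1) % n, Nat.mod_lt _ x.pos⟩

def Semicomplete {V : Type*} (A : V → V → Prop) : Prop :=
  ∀ x y : V, x ≠ y → A x y ∨ A y x

/-- `A` is 2-arc-strong: it stays strong after deleting any set of at most one arc. -/
def TwoArcStrong {V : Type*} (A : V → V → Prop) : Prop :=
  ∀ X : Set (V × V), X.Subsingleton → IsStrong (fun x y => A x y ∧ (x, y) ∉ X)

/-- Digraph isomorphism. -/
def DIso {V W : Type*} (A : V → V → Prop) (B : W → W → Prop) : Prop :=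
  ∃ e : V ≃ W, ∀ x y, A x y ↔ B (e x) (e y)

/-- Arc relation of the directed cycle on `n` vertices. -/
def CycleArc (n : ℕ) : Fin n → Fin n → Prop := fun x y => y = finSucc x

/-- `T` (on `Fin t`) has a Hamiltonian cycle. -/
def HasHamCycle {t : ℕ} (T : Fin t → Fin t → Prop) : Prop :=
  ∃ e : Equiv.Perm (Fin t), ∀ i, T (e i) (e (finSucc i))

/-- Cartesian product of digraphs. -/
def CartProd {V W : Type*} (A : V → V → Prop) (B : W → W → Prop) :
    V × W → V × W → Prop :=
  fun p q => (A p.1 q.1 ∧ p.2 = q.2) ∨ (p.1 = q.1 ∧ B p.2 q.2)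

/-- Strong product of digraphs. -/
def StrongProd {V W : Type*} (A : V → V → Prop) (B : W → W → Prop) :
    V × W → V × W → Prop :=
  fun p q => (A p.1 q.1 ∧ p.2 = q.2) ∨ (p.1 = q.1 ∧ B p.2 q.2) ∨ (A p.1 q.1 ∧ B p.2 q.2)

/-- Lexicographic product of digraphs. -/
def LexProd {V W : Type*} (A : V → V → Prop) (B : W → W → Prop) :
    V × W → V × W → Prop :=
  fun p q => A p.1 q.1 ∨ (p.1 = q.1 ∧ B p.2 q.2)

/-- `k`-th Cartesian power of a digraph. -/
def CartPow {V : Type*} (A : V → V → Prop) (k : ℕ) :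
    (Fin k → V) → (Fin k → V) → Prop :=
  fun f g => ∃ i, A (f i) (g i) ∧ ∀ j, j ≠ i → f j = g j

/-- `A` has a collection of pairwise arc-disjoint directed cycles covering all vertices. -/
def HasCycleCover {V : Type*} (A : V → V → Prop) : Prop :=
  ∃ (k : ℕ) (m : Fin k → ℕ) (c : ∀ i : Fin k, Fin (m i) → V),
    (∀ i, 2 ≤ m i) ∧ (∀ i, Function.Injective (c i)) ∧
    (∀ i x, A (c i x) (c i (finSucc x))) ∧
    (∀ i j x y, c i x = c j y → c i (finSucc x) = c j (finSucc y) → i = j) ∧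
    (∀ v : V, ∃ i x, c i x = v)

/-- The digraph `C3[K2bar, K2bar, K2bar]`. -/
def Exc1 : Fin 3 × Fin 2 → Fin 3 × Fin 2 → Prop := fun p q => q.1 = finSucc p.1

/-- The digraph `C3[P2, K2bar, K2bar]`, the single arc of `P2` being `(0,0) → (0,1)`. -/
def Exc2 : Fin 3 × Fin 2 → Fin 3 × Fin 2 → Prop :=
  fun p q => q.1 = finSucc p.1 ∨ (p.1 = 0 ∧ q.1 = 0 ∧ p.2 = 0 ∧ q.2 = 1)

/-- Block index for `C3[K2bar, K2bar, K3bar]`. -/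
def blk : (Fin 2 ⊕ Fin 2 ⊕ Fin 3) → Fin 3 :=
  Sum.elim (fun _ => 0) (Sum.elim (fun _ => 1) (fun _ => 2))

/-- The digraph `C3[K2bar, K2bar, K3bar]`. -/
def Exc3 : (Fin 2 ⊕ Fin 2 ⊕ Fin 3) → (Fin 2 ⊕ Fin 2 ⊕ Fin 3) → Prop :=
  fun p q => blk q = finSucc (blk p)

/-- `S4`: the complete digraph on 4 vertices minus the directed 4-cycle `x → x+1`. -/
def S4Arc : Fin 4 → Fin 4 → Prop := fun x y => x ≠ y ∧ y ≠ finSucc x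

/-!
The arcs of `T[H_1, ..., H_t]` are split as follows. Fix a vertex `a i` in every block. The first
strong subdigraph consists of all arcs inside the blocks together with the copy of `T` on the
vertices `a i`: one walks inside a block to its `a`-vertex, along `T`, and inside the target
block again. The second consists of all remaining arcs between blocks. Since every block has a
second vertex `b i ≠ a i`, the copy of `T` on the vertices `b i` lies in it, and every vertex
has an arc of it to and from that copy, because in a strong `T` on at least two vertices every
vertex has an out- and an in-neighbour.
-/

theorem IsStrong.exists_out_arc {V : Type*} [Nontrivial V] {A : V → V → Prop}
    (hA : IsStrong A) (x : V) : ∃ y, A x y := by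
  obtain ⟨z, hz⟩ := exists_ne x
  rcases (hA x z).cases_head with h | ⟨y, hy, -⟩
  · exact absurd h.symm hz
  · exact ⟨y, hy⟩

theorem IsStrong.exists_in_arc {V : Type*} [Nontrivial V] {A : V → V → Prop}
    (hA : IsStrong A) (x : V) : ∃ y, A y x := by
  obtain ⟨z, hz⟩ := exists_ne x
  rcases (hA z x).cases_tail with h | ⟨y, -, hy⟩
  · exact absurd h.symm hz
  · exact ⟨y, hy⟩

namespace CompArc

variable {t : ℕ} {Vt : Fin t → Type*} (T : Fin t → Fin t → Prop) (H : ∀ i, Vt i → Vt i → Prop)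

def spineArc (a : ∀ i, Vt i) (x y : Σ i, Vt i) : Prop :=
  (∃ h : x.1 = y.1, H y.1 (h ▸ x.2) y.2) ∨ (T x.1 y.1 ∧ x.2 = a x.1 ∧ y.2 = a y.1)

def crossArc (a : ∀ i, Vt i) (x y : Σ i, Vt i) : Prop :=
  T x.1 y.1 ∧ ¬(x.2 = a x.1 ∧ y.2 = a y.1)

variable {T H}

theorem spineArc_le (a : ∀ i, Vt i) {x y : Σ i, Vt i} :
    spineArc T H a x y → CompArc T H x y
  | .inl h => .inr h
  | .inr h => .inl h.1

theorem crossArc_le (a : ∀ i, Vt i) {x y : Σ i, Vt i} :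
    crossArc T a x y → CompArc T H x y :=
  fun h => .inl h.1

theorem not_spineArc_and_crossArc (hT : ∀ i, ¬T i i) (a : ∀ i, Vt i) (x y : Σ i, Vt i) :
    ¬(spineArc T H a x y ∧ crossArc T a x y) := by
  rintro ⟨⟨h, -⟩ | ⟨-, hx, hy⟩, hxy, hna⟩
  · exact hT _ (h ▸ hxy)
  · exact hna ⟨hx, hy⟩

theorem isStrong_spineArc (hTs : IsStrong T) (hHs : ∀ i, IsStrong (H i)) (a : ∀ i, Vt i) :
    IsStrong (spineArc T H a) := by
  rintro ⟨i, u⟩ ⟨p, v⟩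
  have inBlock : ∀ j (u v : Vt j), Relation.ReflTransGen (spineArc T H a) ⟨j, u⟩ ⟨j, v⟩ :=
    fun j u v => (hHs j u v).lift (Sigma.mk (β := Vt) j) fun _ _ huv => .inl ⟨rfl, huv⟩
  have alongSpine : Relation.ReflTransGen (spineArc T H a) ⟨i, a i⟩ ⟨p, a p⟩ :=
    (hTs i p).lift (fun j => (⟨j, a j⟩ : Σ i, Vt i)) fun _ _ hjk => .inr ⟨hjk, rfl, rfl⟩
  exact ((inBlock i u (a i)).trans alongSpine).trans (inBlock p (a p) v)

theorem isStrong_crossArc (ht : 2 ≤ t) (hTs : IsStrong T) {a b : ∀ i, Vt i}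
    (hab : ∀ i, a i ≠ b i) : IsStrong (crossArc T a) := by
  have : Nontrivial (Fin t) := Fin.nontrivial_iff_two_le.mpr ht
  rintro ⟨i, u⟩ ⟨p, v⟩
  obtain ⟨j, hij⟩ := hTs.exists_out_arc i
  obtain ⟨k, hkp⟩ := hTs.exists_in_arc p
  have enter : crossArc T a ⟨i, u⟩ ⟨j, b j⟩ := ⟨hij, fun h => hab j h.2.symm⟩
  have leave : crossArc T a ⟨k, b k⟩ ⟨p, v⟩ := ⟨hkp, fun h => hab k h.1.symm⟩
  have alongCopy : Relation.ReflTransGen (crossArc T a) ⟨j, b j⟩ ⟨k, b k⟩ :=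
    (hTs j k).lift (fun l => (⟨l, b l⟩ : Σ i, Vt i)) fun l _ hlm => ⟨hlm, fun h => hab l h.1.symm⟩
  exact (alongCopy.head enter).tail leave

end CompArc

theorem stmt_1_general {t : ℕ} (ht : 2 ≤ t) {Vt : Fin t → Type*} [∀ i, Fintype (Vt i)]
    (T : Fin t → Fin t → Prop) (hT : Irreflexive T) (hTs : IsStrong T)
    (H : ∀ i, Vt i → Vt i → Prop)
    (hcard : ∀ i, 2 ≤ Fintype.card (Vt i)) (hHs : ∀ i, IsStrong (H i)) :
    GoodDecomp (CompArc T H) := by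
  have hpair : ∀ i, ∃ x y : Vt i, x ≠ y := fun i =>
    have := Fintype.one_lt_card_iff_nontrivial.mp (hcard i)
    exists_pair_ne (Vt i)
  choose a b hab using hpair
  exact ⟨CompArc.spineArc T H a, CompArc.crossArc T a,
    fun _ _ => CompArc.spineArc_le a, fun _ _ => CompArc.crossArc_le a,
    CompArc.not_spineArc_and_crossArc hT a, CompArc.isStrong_spineArc hTs hHs a,
    CompArc.isStrong_crossArc ht hTs hab⟩

theorem stmt_1 {t : ℕ} (ht : 2 ≤ t) {Vt : Fin t → Type*} [∀ i, Fintype (Vt i)]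
    (T : Fin t → Fin t → Prop) (hT : Irreflexive T) (hTs : IsStrong T)
    (H : ∀ i, Vt i → Vt i → Prop) (hH : ∀ i, Irreflexive (H i))
    (hcard : ∀ i, 2 ≤ Fintype.card (Vt i)) (hHs : ∀ i, IsStrong (H i)) :
    GoodDecomp (CompArc T H) :=
  stmt_1_general ht T hT hTs H hcard hHs
end

section
/- If T is a Hamiltonian digraph on an even number t ≥ 2 of vertices and H_1, ..., H_t are arbitrary digraphs each with at least 2 vertices, then the composition Q = T[H_1, ..., H_t] has a pair of arc-disjoint strong spanning subdigraphs. -/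
/-! Fix a Hamiltonian cycle of `T` and, in the `k`-th part along it, two marked vertices
`c k false`, `c k true`; only arcs from one part to the next are used. In the first subdigraph the
marked vertices form the `2t`-cycle
`c 0 false → ⋯ → c (t-1) false → c 0 true → ⋯ → c (t-1) true → c 0 false`;
in the second the mark flips at every step except the wrap-around, which again gives a single
`2t`-cycle because `t` is even. The two cycles share no arc. Every unmarked vertex is joined from
and to the neighbouring parts through the marked vertices of mark `true` in the first subdigraph
and of mark `false` in the second, so these arcs are disjoint as well. -/

open Relation Function Fin.NatCast

theorem GoodDecomp.mono {V : Type*} {A B : V → V → Prop} (hAB : ∀ x y, A x y → B x y)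
    (h : GoodDecomp A) : GoodDecomp B := by
  obtain ⟨A₁, A₂, h₁, h₂, hdisj, hs₁, hs₂⟩ := h
  exact ⟨A₁, A₂, fun x y h => hAB x y (h₁ x y h), fun x y h => hAB x y (h₂ x y h), hdisj, hs₁, hs₂⟩

theorem reflTransGen_of_periodic {V : Type*} {A : V → V → Prop} {w : ℕ → V} {p : ℕ}
    (hw : ∀ n, A (w n) (w (n + 1))) (hp : Periodic w p) (hp0 : 0 < p) (m n : ℕ) :
    ReflTransGen A (w m) (w n) := by
  rw [← hp.nat_mul m n, Nat.cast_id]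
  exact Nat.rel_of_forall_rel_succ_of_le (ReflTransGen A) (fun n => .single (hw n)) (by nlinarith)

theorem finSucc_eq_add_one {n : ℕ} [NeZero n] (x : Fin n) : finSucc x = x + 1 := by
  ext
  simp [finSucc, Fin.val_add]

namespace CycleBlowup

variable {V : Type*} {t : ℕ} (pos : V → Fin t) (c : Fin t → Bool → V)

open Classical in
noncomputable def mark (x : V) : Option Bool :=
  if x = c (pos x) true then some true else if x = c (pos x) false then some false else none

/-- `none` means unmarked; `wrap` says that the arc enters the first part. -/
def markStep (σ wrap : Bool) : Option Bool → Option Bool → Prop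
  | some s, some s' => s' = (s ^^ σ ^^ wrap)
  | some s, none => s = !σ
  | none, some s' => s' = !σ
  | none, none => False

def arc (σ : Bool) (x y : V) : Prop :=
  pos y = finSucc (pos x) ∧ markStep σ (decide ((pos y).val = 0)) (mark pos c x) (mark pos c y)

/-- The mark after `n` steps along the cycle of marked vertices of `arc σ`: it flips at each of the
`n / t` wrap-arounds and, if `σ`, at each of the `n` steps. -/
def label (t : ℕ) (σ : Bool) (n : ℕ) : Bool := Nat.bodd (n / t + σ.toNat * n)

def walk [NeZero t] (σ : Bool) (n : ℕ) : V := c n (label t σ n)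

theorem not_markStep_false_and_markStep_true (wrap : Bool) (p q : Option Bool) :
    ¬ (markStep false wrap p q ∧ markStep true wrap p q) := by
  rcases p with _ | s <;> rcases q with _ | s' <;> cases wrap <;> simp [markStep, Bool.eq_not]

theorem not_arc_false_and_arc_true (x y : V) : ¬ (arc pos c false x y ∧ arc pos c true x y) :=
  fun ⟨⟨_, h₁⟩, ⟨_, h₂⟩⟩ => not_markStep_false_and_markStep_true _ _ _ ⟨h₁, h₂⟩

theorem label_succ (σ : Bool) (n : ℕ) :
    label t σ (n + 1) = (label t σ n ^^ σ ^^ decide (t ∣ n + 1)) := by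
  unfold label
  rw [Nat.succ_div]
  cases σ <;> split_ifs with h <;> simp [h, Nat.bodd_add, mul_add]

theorem walk_periodic [NeZero t] (σ : Bool) : Periodic (walk c σ) (2 * t) := by
  intro n
  have hdiv : (n + 2 * t) / t = n / t + 2 := by
    rw [Nat.add_mul_div_right _ _ (NeZero.pos t)]
  have hcast : ((2 * t : ℕ) : Fin t) = 0 := Fin.natCast_eq_zero.2 (dvd_mul_left t 2)
  simp [walk, label, hdiv, hcast, Nat.bodd_add, mul_add]

theorem exists_walk_eq [NeZero t] (hte : Even t) (σ : Bool) (k : Fin t) (s : Bool) :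
    ∃ n, walk c σ n = c k s := by
  have hk : k.val / t = 0 := Nat.div_eq_of_lt k.isLt
  have hkt : (k.val + t) / t = 1 := by rw [Nat.add_div_right _ (NeZero.pos t), hk]
  have ht : Nat.bodd t = false := by
    obtain ⟨r, hr⟩ := hte
    simp [hr, Nat.bodd_add]
  have hflip : label t σ (k.val + t) = !label t σ k.val := by
    cases σ <;> simp [label, hk, hkt, ht, Nat.bodd_add, mul_add]
  by_cases hs : label t σ k.val = s
  · exact ⟨k.val, by simp [walk, hs]⟩
  · exact ⟨k.val + t, by simp [walk, hflip, Bool.eq_not.2 hs]⟩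

variable {pos c}

theorem eq_of_mark_eq_some {x : V} {s : Bool} (h : mark pos c x = some s) : x = c (pos x) s := by
  unfold mark at h
  split_ifs at h with h₁ h₂ <;> cases h <;> assumption

section

variable (hpos : ∀ k s, pos (c k s) = k) (hc : ∀ k, Injective (c k))
include hpos hc

theorem mark_apply (k : Fin t) (s : Bool) : mark pos c (c k s) = some s := by
  cases s <;> simp [mark, hpos, (hc k).eq_iff]

theorem arc_walk_succ [NeZero t] (σ : Bool) (n : ℕ) :
    arc pos c σ (walk c σ n) (walk c σ (n + 1)) := by
  have hwrap : (((n + 1 : ℕ) : Fin t).val = 0) ↔ t ∣ n + 1 := by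
    rw [Fin.val_natCast, Nat.dvd_iff_mod_eq_zero]
  refine ⟨?_, ?_⟩
  · simp only [walk, hpos, finSucc_eq_add_one, Nat.cast_succ]
  · simp only [walk, hpos, mark_apply hpos hc, markStep, label_succ, hwrap]

variable (hte : Even t) (σ : Bool)
include hte

theorem exists_reflTransGen_to_walk [NeZero t] (x : V) :
    ∃ n, ReflTransGen (arc pos c σ) x (walk c σ n) := by
  cases hx : mark pos c x with
  | some s =>
    obtain ⟨n, hn⟩ := exists_walk_eq c hte σ (pos x) s
    exact ⟨n, by rw [hn, ← eq_of_mark_eq_some hx]⟩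
  | none =>
    obtain ⟨n, hn⟩ := exists_walk_eq c hte σ (pos x + 1) (!σ)
    refine ⟨n, .single ?_⟩
    rw [hn]
    exact ⟨by rw [hpos, finSucc_eq_add_one], by simp [hx, mark_apply hpos hc, markStep]⟩

theorem exists_reflTransGen_from_walk [NeZero t] (y : V) :
    ∃ n, ReflTransGen (arc pos c σ) (walk c σ n) y := by
  cases hy : mark pos c y with
  | some s =>
    obtain ⟨n, hn⟩ := exists_walk_eq c hte σ (pos y) s
    exact ⟨n, by rw [hn, ← eq_of_mark_eq_some hy]⟩
  | none =>
    obtain ⟨n, hn⟩ := exists_walk_eq c hte σ (pos y - 1) (!σ)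
    refine ⟨n, .single ?_⟩
    rw [hn]
    exact ⟨by rw [hpos, finSucc_eq_add_one, sub_add_cancel],
      by simp [hy, mark_apply hpos hc, markStep]⟩

theorem isStrong_arc : IsStrong (arc pos c σ) := by
  intro x y
  have : NeZero t := NeZero.of_pos (pos x).pos
  obtain ⟨m, hm⟩ := exists_reflTransGen_to_walk hpos hc hte σ x
  obtain ⟨n, hn⟩ := exists_reflTransGen_from_walk hpos hc hte σ y
  have hwalk := reflTransGen_of_periodic (arc_walk_succ hpos hc σ) (walk_periodic c σ)
    (by have := NeZero.pos t; omega) m n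
  exact hm.trans (hwalk.trans hn)

theorem goodDecomp : GoodDecomp (fun x y => pos y = finSucc (pos x)) :=
  ⟨arc pos c false, arc pos c true, fun _ _ h => h.1, fun _ _ h => h.1,
    not_arc_false_and_arc_true pos c, isStrong_arc hpos hc hte false, isStrong_arc hpos hc hte true⟩

end

end CycleBlowup

theorem stmt_2_general {t : ℕ} (hte : Even t) {Vt : Fin t → Type*}
    [∀ i, Fintype (Vt i)]
    (T : Fin t → Fin t → Prop) (hTham : HasHamCycle T)
    (H : ∀ i, Vt i → Vt i → Prop)
    (hcard : ∀ i, 2 ≤ Fintype.card (Vt i)) :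
    GoodDecomp (CompArc T H) := by
  obtain ⟨e, he⟩ := hTham
  have f : ∀ i, Bool ↪ Vt i := fun i =>
    (Function.Embedding.nonempty_of_card_le (by simpa using hcard i)).some
  have hblowup := CycleBlowup.goodDecomp (pos := fun x : Σ i, Vt i => e.symm x.1)
    (c := fun k s => ⟨e k, f (e k) s⟩) (by simp)
    (fun k => sigma_mk_injective.comp (f (e k)).injective) hte
  refine hblowup.mono ?_
  rintro ⟨i, u⟩ ⟨j, v⟩ h
  left
  simpa [← h] using he (e.symm i)

theorem stmt_2 {t : ℕ} (ht : 2 ≤ t) (hte : Even t) {Vt : Fin t → Type*}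
    [∀ i, Fintype (Vt i)]
    (T : Fin t → Fin t → Prop) (hT : Irreflexive T) (hTham : HasHamCycle T)
    (H : ∀ i, Vt i → Vt i → Prop) (hH : ∀ i, Irreflexive (H i))
    (hcard : ∀ i, 2 ≤ Fintype.card (Vt i)) :
    GoodDecomp (CompArc T H) :=
  stmt_2_general hte T hTham H hcard
end

section
/- The digraph Q = C3[P2, K2bar, K2bar], the composition of the directed 3-cycle with the single-arc digraph on 2 vertices and two arcless digraphs on 2 vertices, does not have a pair of arc-disjoint strong spanning subdigraphs. -/
/-!
Apart from `(0, 0)`, every vertex of `Q` sends its arcs to one block `{w, twin w}`, and apart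
from `(0, 1)`, every vertex receives its arcs from one block. Two arc-disjoint strong spanning
subdigraphs `A₁`, `A₂` must therefore take one arc of each such pair. Following `A₁` from `(0, 1)`
along `x`, `y`, `z` forces `A₂` to contain `(0, 1) → twin x → y → twin z`, and one of `z`, `twin z`
is `(0, 1)`. This gives `A₁` or `A₂` a triangle through `(0, 1)` whose vertices all have out-degree
one there, so the triangle is closed and `(0, 0)` cannot be reached from it.
-/

section GoodDecomposition

variable {V : Type*} {A A₁ A₂ : V → V → Prop}

theorem IsStrong.exists_out [Nontrivial V] (h : IsStrong A) (x : V) : ∃ z, A x z := by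
  obtain ⟨y, hy⟩ := exists_ne x
  rcases (h x y).cases_head with rfl | ⟨z, hz, -⟩
  · exact absurd rfl hy
  · exact ⟨z, hz⟩

theorem IsStrong.exists_in [Nontrivial V] (h : IsStrong A) (y : V) : ∃ z, A z y := by
  obtain ⟨x, hx⟩ := exists_ne y
  rcases (h x y).cases_tail with rfl | ⟨z, -, hz⟩
  · exact absurd rfl hx
  · exact ⟨z, hz⟩

theorem IsStrong.mem_of_closed (h : IsStrong A) {S : Set V}
    (hS : ∀ u v, u ∈ S → A u v → v ∈ S) {x : V} (hx : x ∈ S) (y : V) : y ∈ S := by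
  induction h x y with
  | refl => exact hx
  | tail _ huv ih => exact hS _ _ ih huv

structure IsGoodDecomp (A A₁ A₂ : V → V → Prop) : Prop where
  left_le : ∀ x y, A₁ x y → A x y
  right_le : ∀ x y, A₂ x y → A x y
  disjoint : ∀ x y, ¬ (A₁ x y ∧ A₂ x y)
  strong_left : IsStrong A₁
  strong_right : IsStrong A₂

namespace IsGoodDecomp

variable (P : IsGoodDecomp A A₁ A₂)
include P

theorem symm : IsGoodDecomp A A₂ A₁ :=
  ⟨P.right_le, P.left_le, fun x y h => P.disjoint x y h.symm, P.strong_right, P.strong_left⟩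

theorem right_of_left_out [Nontrivial V] {v w w' : V} (hv : ∀ z, A v z → z = w ∨ z = w')
    (h : A₁ v w) : A₂ v w' := by
  obtain ⟨z, hz⟩ := P.strong_right.exists_out v
  rcases hv z (P.right_le _ _ hz) with rfl | rfl
  · exact (P.disjoint _ _ ⟨h, hz⟩).elim
  · exact hz

theorem eq_of_left_out [Nontrivial V] {v w w' z : V} (hv : ∀ z, A v z → z = w ∨ z = w')
    (h : A₁ v w) (hz : A₁ v z) : z = w := by
  rcases hv z (P.left_le _ _ hz) with rfl | rfl
  · rfl
  · exact (P.disjoint _ _ ⟨hz, P.right_of_left_out hv h⟩).elim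

theorem right_of_left_in [Nontrivial V] {v v' w : V} (hw : ∀ u, A u w → u = v ∨ u = v')
    (h : A₁ v w) : A₂ v' w := by
  obtain ⟨u, hu⟩ := P.strong_right.exists_in w
  rcases hw u (P.right_le _ _ hu) with rfl | rfl
  · exact (P.disjoint _ _ ⟨h, hu⟩).elim
  · exact hu

end IsGoodDecomp

end GoodDecomposition

def twin {α : Type*} (p : α × Fin 2) : α × Fin 2 := (p.1, p.2 + 1)

theorem exc2_out_eq_or_twin :
    ∀ {v w z : Fin 3 × Fin 2}, v ≠ (0, 0) → Exc2 v w → Exc2 v z → z = w ∨ z = twin w := by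
  unfold Exc2 twin; decide

theorem exc2_in_eq_or_twin :
    ∀ {u v w : Fin 3 × Fin 2}, w ≠ (0, 1) → Exc2 v w → Exc2 u w → u = v ∨ u = twin v := by
  unfold Exc2 twin; decide

theorem exc2_three_step_walk : ∀ {x y z : Fin 3 × Fin 2}, Exc2 (0, 1) x → Exc2 x y → Exc2 y z →
    x ≠ (0, 0) ∧ y ≠ (0, 0) ∧ y ≠ (0, 1) ∧ (z = (0, 1) ∨ twin z = (0, 1)) := by
  unfold Exc2 twin; decide

namespace IsGoodDecomp

variable {A₁ A₂ : Fin 3 × Fin 2 → Fin 3 × Fin 2 → Prop} (P : IsGoodDecomp Exc2 A₁ A₂)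
include P

theorem exc2_right_of_left_out {v w : Fin 3 × Fin 2} (hv : v ≠ (0, 0)) (h : A₁ v w) :
    A₂ v (twin w) :=
  P.right_of_left_out (fun _ => exc2_out_eq_or_twin hv (P.left_le _ _ h)) h

theorem exc2_eq_of_left_out {v w z : Fin 3 × Fin 2} (hv : v ≠ (0, 0)) (h : A₁ v w)
    (hz : A₁ v z) : z = w :=
  P.eq_of_left_out (fun _ => exc2_out_eq_or_twin hv (P.left_le _ _ h)) h hz

theorem exc2_right_of_left_in {v w : Fin 3 × Fin 2} (hw : w ≠ (0, 1)) (h : A₁ v w) :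
    A₂ (twin v) w :=
  P.right_of_left_in (fun _ => exc2_in_eq_or_twin hw (P.left_le _ _ h)) h

theorem exc2_not_triangle {x y : Fin 3 × Fin 2} (hbx : A₁ (0, 1) x) (hxy : A₁ x y)
    (hyb : A₁ y (0, 1)) : False := by
  obtain ⟨hx, hy, -, -⟩ :=
    exc2_three_step_walk (P.left_le _ _ hbx) (P.left_le _ _ hxy) (P.left_le _ _ hyb)
  have hclosed : ∀ u v, u ∈ ({(0, 1), x, y} : Set _) → A₁ u v → v ∈ ({(0, 1), x, y} : Set _) := by
    rintro u v (rfl | rfl | rfl) huv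
    · exact .inr (.inl (P.exc2_eq_of_left_out (by decide) hbx huv))
    · exact .inr (.inr (P.exc2_eq_of_left_out hx hxy huv))
    · exact .inl (P.exc2_eq_of_left_out hy hyb huv)
  rcases P.strong_left.mem_of_closed hclosed (Set.mem_insert _ _) (0, 0) with h | h | h
  · exact absurd h (by decide)
  · exact hx h.symm
  · exact hy h.symm

end IsGoodDecomp

theorem stmt_5 : ¬ GoodDecomp Exc2 := by
  rintro ⟨A₁, A₂, h₁, h₂, hd, hs₁, hs₂⟩
  have P : IsGoodDecomp Exc2 A₁ A₂ := ⟨h₁, h₂, hd, hs₁, hs₂⟩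
  obtain ⟨x, hbx⟩ := hs₁.exists_out (0, 1)
  obtain ⟨y, hxy⟩ := hs₁.exists_out x
  obtain ⟨z, hyz⟩ := hs₁.exists_out y
  obtain ⟨-, hya, hyb, hz⟩ := exc2_three_step_walk (h₁ _ _ hbx) (h₁ _ _ hxy) (h₁ _ _ hyz)
  have hbx' : A₂ (0, 1) (twin x) := P.exc2_right_of_left_out (by decide) hbx
  have hx'y : A₂ (twin x) y := P.exc2_right_of_left_in hyb hxy
  have hyz' : A₂ y (twin z) := P.exc2_right_of_left_out hya hyz
  rcases hz with rfl | hz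
  · exact P.exc2_not_triangle hbx hxy hyz
  · exact P.symm.exc2_not_triangle hbx' hx'y (hz ▸ hyz')
end

section
/- For all integers n, m ≥ 2, the strong product digraph C_n ⊠ C_m of two directed cycles can be decomposed into two arc-disjoint strong spanning subdigraphs. -/
/-!
Split the arcs of `C_n ⊠ C_m` on `Fin n × Fin m` into the horizontal arcs `(x, y) → (x + 1, y)`
together with the vertical arcs `(x, y) → (x, y + 1)` outside column `0`, and the diagonal arcs
`(x, y) → (x + 1, y + 1)` together with the vertical arcs inside column `0`.
In the first part one walks along the row to column `1`, up that column to the target row, and along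
the row to the target. In the second part one walks diagonally to column `0`, up column `0`, and
diagonally again; since walking `k` diagonal steps shifts the row by `k`, the height reached in
column `0` can be chosen so that the last diagonal walk ends at the target.
-/

open Function Relation

theorem Relation.ReflTransGen.iterate {α : Type*} {R : α → α → Prop} {f : α → α}
    (hf : ∀ a, R a (f a)) (a : α) (k : ℕ) : ReflTransGen R a (f^[k] a) := by
  induction k with
  | zero => exact .refl
  | succ k ih => exact ih.tail (iterate_succ_apply' f k a ▸ hf _)

section finSucc

variable {n : ℕ}

theorem finSucc_ne_self (hn : 2 ≤ n) (x : Fin n) : finSucc x ≠ x := by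
  intro h
  have hx := congrArg Fin.val h
  simp only [finSucc] at hx
  rcases Nat.lt_or_ge (x.val + 1) n with hlt | hge
  · rw [Nat.mod_eq_of_lt hlt] at hx; omega
  · rw [show x.val + 1 = n by omega, Nat.mod_self] at hx; omega

theorem val_iterate_finSucc (k : ℕ) (x : Fin n) : (finSucc^[k] x).val = (x.val + k) % n := by
  induction k with
  | zero => simp [Nat.mod_eq_of_lt x.isLt]
  | succ k ih =>
    rw [iterate_succ_apply']
    show ((finSucc^[k] x).val + 1) % n = _
    rw [ih, Nat.mod_add_mod, Nat.add_assoc]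

theorem exists_iterate_finSucc_eq (x y : Fin n) : ∃ k, finSucc^[k] x = y := by
  refine ⟨y.val + (n - x.val), Fin.ext ?_⟩
  rw [val_iterate_finSucc, show x.val + (y.val + (n - x.val)) = y.val + n by omega,
    Nat.add_mod_right, Nat.mod_eq_of_lt y.isLt]

theorem finSucc_surjective : Surjective (finSucc : Fin n → Fin n) := by
  intro y
  obtain ⟨k, hk⟩ := exists_iterate_finSucc_eq (finSucc y) y
  exact ⟨finSucc^[k] y, by
    rw [← iterate_succ_apply' finSucc k y, iterate_succ_apply, hk]⟩

theorem reflTransGen_of_cycle {V : Type*} {R : V → V → Prop} (f : Fin n → V)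
    (hf : ∀ x, R (f x) (f (finSucc x))) (x y : Fin n) : ReflTransGen R (f x) (f y) := by
  obtain ⟨k, rfl⟩ := exists_iterate_finSucc_eq x y
  exact (ReflTransGen.iterate (R := fun a b => R (f a) (f b)) hf x k).lift f fun _ _ h => h

end finSucc

namespace CycleStrongProd

variable {n m : ℕ}

def horizontalPart (n m : ℕ) (p q : Fin n × Fin m) : Prop :=
  (q.1 = finSucc p.1 ∧ q.2 = p.2) ∨ (q.1 = p.1 ∧ q.2 = finSucc p.2 ∧ p.1.val ≠ 0)

def diagonalPart (n m : ℕ) (p q : Fin n × Fin m) : Prop :=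
  (q.1 = finSucc p.1 ∧ q.2 = finSucc p.2) ∨ (q.1 = p.1 ∧ q.2 = finSucc p.2 ∧ p.1.val = 0)

theorem horizontalPart_le {p q : Fin n × Fin m} (h : horizontalPart n m p q) :
    StrongProd (CycleArc n) (CycleArc m) p q := by
  rcases h with ⟨h1, h2⟩ | ⟨h1, h2, -⟩
  · exact .inl ⟨h1, h2.symm⟩
  · exact .inr (.inl ⟨h1.symm, h2⟩)

theorem diagonalPart_le {p q : Fin n × Fin m} (h : diagonalPart n m p q) :
    StrongProd (CycleArc n) (CycleArc m) p q := by
  rcases h with ⟨h1, h2⟩ | ⟨h1, h2, -⟩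
  · exact .inr (.inr ⟨h1, h2⟩)
  · exact .inr (.inl ⟨h1.symm, h2⟩)

theorem not_horizontalPart_and_diagonalPart (hn : 2 ≤ n) (hm : 2 ≤ m) (p q : Fin n × Fin m) :
    ¬ (horizontalPart n m p q ∧ diagonalPart n m p q) := by
  rintro ⟨⟨h1, h2⟩ | ⟨h1, h2, h0⟩, ⟨d1, d2⟩ | ⟨d1, d2, d0⟩⟩
  · exact finSucc_ne_self hm p.2 (d2.symm.trans h2)
  · exact finSucc_ne_self hn p.1 (h1.symm.trans d1)
  · exact finSucc_ne_self hn p.1 (d1.symm.trans h1)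
  · exact h0 d0

theorem isStrong_horizontalPart (hn : 2 ≤ n) : IsStrong (horizontalPart n m) := by
  rintro ⟨x, y⟩ ⟨x', y'⟩
  let one : Fin n := ⟨1, hn⟩
  have row (y : Fin m) (x x' : Fin n) : ReflTransGen (horizontalPart n m) (x, y) (x', y) :=
    reflTransGen_of_cycle (fun x => (x, y)) (fun _ => .inl ⟨rfl, rfl⟩) x x'
  have column : ReflTransGen (horizontalPart n m) (one, y) (one, y') :=
    reflTransGen_of_cycle (fun y => (one, y)) (fun _ => .inr ⟨rfl, rfl, one_ne_zero⟩) y y'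
  exact ((row y x one).trans column).trans (row y' one x')

theorem isStrong_diagonalPart : IsStrong (diagonalPart n m) := by
  rintro p ⟨x', y'⟩
  let zero : Fin n := ⟨0, p.1.pos⟩
  have diagonal (q : Fin n × Fin m) (k : ℕ) :
      ReflTransGen (diagonalPart n m) q (finSucc^[k] q.1, finSucc^[k] q.2) := by
    have := ReflTransGen.iterate (R := diagonalPart n m) (f := Prod.map finSucc finSucc)
      (fun _ => .inl ⟨rfl, rfl⟩) q k
    rwa [Prod.map_iterate] at this
  have column (y y₀ : Fin m) : ReflTransGen (diagonalPart n m) (zero, y) (zero, y₀) :=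
    reflTransGen_of_cycle (fun y => (zero, y)) (fun _ => .inr ⟨rfl, rfl, rfl⟩) y y₀
  obtain ⟨k, hk⟩ := exists_iterate_finSucc_eq p.1 zero
  obtain ⟨j, hj⟩ := exists_iterate_finSucc_eq zero x'
  obtain ⟨y₀, hy₀⟩ := finSucc_surjective.iterate j y'
  have toColumn := diagonal p k
  have fromColumn := diagonal (zero, y₀) j
  rw [hk] at toColumn
  rw [hj, hy₀] at fromColumn
  exact (toColumn.trans (column _ y₀)).trans fromColumn

end CycleStrongProd

theorem stmt_13 (n m : ℕ) (hn : 2 ≤ n) (hm : 2 ≤ m) :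
    GoodDecomp (StrongProd (CycleArc n) (CycleArc m)) :=
  ⟨CycleStrongProd.horizontalPart n m, CycleStrongProd.diagonalPart n m,
    fun _ _ => CycleStrongProd.horizontalPart_le, fun _ _ => CycleStrongProd.diagonalPart_le,
    CycleStrongProd.not_horizontalPart_and_diagonalPart hn hm,
    CycleStrongProd.isStrong_horizontalPart hn, CycleStrongProd.isStrong_diagonalPart⟩
end

section
/- For any strong digraphs G and H, each with at least 2 vertices, the strong product digraph G ⊠ H can be decomposed into two arc-disjoint strong spanning subdigraphs. -/
/-!
Fix a vertex `x₀` of `G` and an arc `w₀ → w₁` of `H`. The first subdigraph takes every arc that moves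
in `G` (horizontal, or diagonal unless its `H`-part is `w₀ → w₁`) together with the single vertical arc
`(x₀, w₀) → (x₀, w₁)`; the second takes every other vertical arc and the diagonal arcs whose `H`-part
is `w₀ → w₁`. In the first, a vertical step `(x, y) → (x, y')` is simulated by a diagonal step
followed by a horizontal walk back to `x`, or by a detour through `x₀` when `y → y'` is `w₀ → w₁`.
In the second, every vertex reaches the level `w₁` of any column by walking down to `w₀` and
stepping diagonally, which also replaces the missing vertical arc.
-/

open Relation

section

variable {V W : Type*}

theorem Relation.ReflTransGen.restrict_src_ne_target {α : Type*} {r : α → α → Prop} {a b : α}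
    (h : ReflTransGen r a b) : ReflTransGen (fun x y => r x y ∧ x ≠ b) a b := by
  induction h using ReflTransGen.head_induction_on with
  | refl => exact .refl
  | @head a c hac _ ih =>
    by_cases hab : a = b
    · rw [hab]
    · exact .head ⟨hac, hab⟩ ih

theorem IsStrong.of_le_reflTransGen {A B : V → V → Prop} (hA : IsStrong A)
    (h : A ≤ ReflTransGen B) : IsStrong B :=
  fun x y => reflTransGen_closed h _ _ (hA x y)

theorem IsStrong.exists_adj [Nontrivial V] {G : V → V → Prop} (hG : IsStrong G) (x : V) :
    ∃ y, G x y := by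
  obtain ⟨y, hy⟩ := exists_ne x
  rcases (hG x y).cases_head with rfl | ⟨z, hz, -⟩
  · exact absurd rfl hy
  · exact ⟨z, hz⟩

theorem isStrong_cartProd {G : V → V → Prop} {H : W → W → Prop} (hG : IsStrong G)
    (hH : IsStrong H) : IsStrong (CartProd G H) := fun p q =>
  (ReflTransGen.lift (·, p.2) (fun _ _ h => Or.inl ⟨h, rfl⟩) _ _ (hG p.1 q.1)).trans
    (ReflTransGen.lift (q.1, ·) (fun _ _ h => Or.inr ⟨rfl, h⟩) _ _ (hH p.2 q.2))

namespace StrongProd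

variable (G : V → V → Prop) (H : W → W → Prop) (x₀ : V) (w₀ w₁ : W)

def part₁ : V × W → V × W → Prop := fun p q =>
  (G p.1 q.1 ∧ p.2 = q.2) ∨ (G p.1 q.1 ∧ H p.2 q.2 ∧ ¬(p.2 = w₀ ∧ q.2 = w₁)) ∨
    (p = (x₀, w₀) ∧ q = (x₀, w₁))

def part₂ : V × W → V × W → Prop := fun p q =>
  (p.1 = q.1 ∧ H p.2 q.2 ∧ ¬(p = (x₀, w₀) ∧ q = (x₀, w₁))) ∨
    (G p.1 q.1 ∧ p.2 = w₀ ∧ q.2 = w₁)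

variable {G H x₀ w₀ w₁}

theorem part₁_le (hw : H w₀ w₁) : part₁ G H x₀ w₀ w₁ ≤ StrongProd G H := by
  rintro ⟨x, y⟩ ⟨x', y'⟩ (h | ⟨hx, hy, -⟩ | ⟨⟨⟩, ⟨⟩⟩)
  · exact Or.inl h
  · exact Or.inr (Or.inr ⟨hx, hy⟩)
  · exact Or.inr (Or.inl ⟨rfl, hw⟩)

theorem part₂_le (hw : H w₀ w₁) : part₂ G H x₀ w₀ w₁ ≤ StrongProd G H := by
  rintro ⟨x, y⟩ ⟨x', y'⟩ (⟨hx, hy, -⟩ | ⟨hx, rfl, rfl⟩)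
  · exact Or.inr (Or.inl ⟨hx, hy⟩)
  · exact Or.inr (Or.inr ⟨hx, hw⟩)

theorem part₁_disjoint_part₂ (hG : ∀ x, ¬G x x) (hw : w₀ ≠ w₁) (p q : V × W) :
    ¬(part₁ G H x₀ w₀ w₁ p q ∧ part₂ G H x₀ w₀ w₁ p q) := by
  obtain ⟨x, y⟩ := p
  obtain ⟨x', y'⟩ := q
  simp only [part₁, part₂, Prod.mk.injEq]
  rintro ⟨h₁ | h₁ | h₁, h₂ | h₂⟩ <;> grind

theorem part₁_reach_horizontal {x x' : V} (h : ReflTransGen G x x') (y : W) :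
    ReflTransGen (part₁ G H x₀ w₀ w₁) (x, y) (x', y) :=
  ReflTransGen.lift (·, y) (fun _ _ h => Or.inl ⟨h, rfl⟩) _ _ h

theorem part₁_reach_vertical [Nontrivial V] (hG : IsStrong G) {y y' : W} (h : H y y') (x : V) :
    ReflTransGen (part₁ G H x₀ w₀ w₁) (x, y) (x, y') := by
  by_cases hy : y = w₀ ∧ y' = w₁
  · obtain ⟨rfl, rfl⟩ := hy
    exact ((part₁_reach_horizontal (hG x x₀) y).tail (Or.inr (Or.inr ⟨rfl, rfl⟩))).trans
      (part₁_reach_horizontal (hG x₀ x) y')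
  · obtain ⟨z, hz⟩ := hG.exists_adj x
    exact .head (Or.inr (Or.inl ⟨hz, h, hy⟩)) (part₁_reach_horizontal (hG z x) y')

theorem isStrong_part₁ [Nontrivial V] (hG : IsStrong G) (hH : IsStrong H) :
    IsStrong (part₁ G H x₀ w₀ w₁) :=
  (isStrong_cartProd hG hH).of_le_reflTransGen <| by
    rintro ⟨x, y⟩ ⟨x', y'⟩ (⟨h, rfl⟩ | ⟨rfl, h⟩)
    · exact part₁_reach_horizontal (.single h) y
    · exact part₁_reach_vertical hG h x

theorem part₂_reach_of_adj (hH : IsStrong H) {x x' : V} (h : G x x') (y : W) :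
    ReflTransGen (part₂ G H x₀ w₀ w₁) (x, y) (x', w₁) := by
  have down : ReflTransGen (part₂ G H x₀ w₀ w₁) (x, y) (x, w₀) :=
    ReflTransGen.lift (x, ·)
      (fun _ _ ⟨hab, ha⟩ => Or.inl ⟨rfl, hab, fun h => ha (Prod.ext_iff.1 h.1).2⟩) _ _
      (hH y w₀).restrict_src_ne_target
  exact down.tail (Or.inr ⟨h, rfl, rfl⟩)

theorem part₂_reach_top [Nontrivial V] (hG : IsStrong G) (hH : IsStrong H) (x : V) (y : W)
    (x' : V) : ReflTransGen (part₂ G H x₀ w₀ w₁) (x, y) (x', w₁) := by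
  obtain ⟨z, hz⟩ := hG.exists_adj x
  exact (part₂_reach_of_adj hH hz y).trans
    (ReflTransGen.lift' (·, w₁) (fun _ _ h => part₂_reach_of_adj hH h w₁) _ _ (hG z x'))

theorem part₂_reach_vertical [Nontrivial V] (hG : IsStrong G) (hH : IsStrong H) {y y' : W}
    (h : H y y') (x : V) : ReflTransGen (part₂ G H x₀ w₀ w₁) (x, y) (x, y') := by
  by_cases hxy : (x, y) = (x₀, w₀) ∧ (x, y') = (x₀, w₁)
  · obtain ⟨hxy, hxy'⟩ := hxy
    rw [hxy, hxy']
    exact part₂_reach_top hG hH x₀ w₀ x₀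
  · exact .single (Or.inl ⟨rfl, h, hxy⟩)

theorem isStrong_part₂ [Nontrivial V] (hG : IsStrong G) (hH : IsStrong H) :
    IsStrong (part₂ G H x₀ w₀ w₁) :=
  (isStrong_cartProd hG hH).of_le_reflTransGen <| by
    rintro ⟨x, y⟩ ⟨x', y'⟩ (⟨h, rfl⟩ | ⟨rfl, h⟩)
    · exact (part₂_reach_top hG hH x y x').trans
        (ReflTransGen.lift' (x', ·) (fun _ _ h => part₂_reach_vertical hG hH h x') _ _ (hH w₁ y))
    · exact part₂_reach_vertical hG hH h x

end StrongProd

end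

open StrongProd in
theorem stmt_14_general {V W : Type*} [Nontrivial V] [Nontrivial W]
    (G : V → V → Prop) (H : W → W → Prop)
    (hG : Irreflexive G) (hH : Irreflexive H)
    (hGs : IsStrong G) (hHs : IsStrong H) :
    GoodDecomp (StrongProd G H) := by
  obtain ⟨x₀⟩ : Nonempty V := inferInstance
  obtain ⟨w₀⟩ : Nonempty W := inferInstance
  obtain ⟨w₁, hw⟩ := hHs.exists_adj w₀
  have hw₀₁ : w₀ ≠ w₁ := fun h => hH w₀ (h ▸ hw)
  exact ⟨part₁ G H x₀ w₀ w₁, part₂ G H x₀ w₀ w₁, part₁_le hw, part₂_le hw,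
    part₁_disjoint_part₂ hG hw₀₁, isStrong_part₁ hGs hHs, isStrong_part₂ hGs hHs⟩

theorem stmt_14 {V W : Type*} [Fintype V] [Fintype W] [Nontrivial V] [Nontrivial W]
    (G : V → V → Prop) (H : W → W → Prop)
    (hG : Irreflexive G) (hH : Irreflexive H)
    (hGs : IsStrong G) (hHs : IsStrong H) :
    GoodDecomp (StrongProd G H) :=
  stmt_14_general G H hG hH hGs hHs
end

section
/- For any strong digraphs G and H, each with at least 2 vertices, the lexicographic product digraph G ∘ H can be decomposed into two arc-disjoint strong spanning subdigraphs. -/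
/-!
Fix a vertex `x₀` of `G`. The first subdigraph keeps the arcs of the copies of `G` at each fixed
`H`-coordinate together with the copy of `H` over `x₀`: one travels along `G` to `x₀`, moves
inside `H` there and travels back. The second keeps the arcs of `G ∘ H` that change both
coordinates together with the copies of `H` over every `x ≠ x₀`: a `G`-walk lifts to it since
the `H`-coordinate of each step can be chosen freely among at least two values, and it adjusts the
`H`-coordinate inside a copy over some `s ≠ x₀`. The two are disjoint because `G` has no loops.
-/

open Relation

theorem Relation.ReflTransGen.exists_prod_lift_from {α β : Type*} {R : α → α → Prop}
    {S : α × β → α × β → Prop} (hS : ∀ a b u, R a b → ∃ v, S (a, u) (b, v))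
    {a b : α} (hab : ReflTransGen R a b) (u : β) : ∃ v, ReflTransGen S (a, u) (b, v) := by
  induction hab with
  | refl => exact ⟨u, .refl⟩
  | tail _ hbc ih =>
    obtain ⟨v, hv⟩ := ih
    obtain ⟨w, hw⟩ := hS _ _ v hbc
    exact ⟨w, hv.tail hw⟩

theorem Relation.ReflTransGen.exists_prod_lift_to {α β : Type*} {R : α → α → Prop}
    {S : α × β → α × β → Prop} (hS : ∀ a b v, R a b → ∃ u, S (a, u) (b, v))
    {a b : α} (hab : ReflTransGen R a b) (v : β) : ∃ u, ReflTransGen S (a, u) (b, v) :=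
  let ⟨u, hu⟩ := hab.swap.exists_prod_lift_from (S := flip S) (fun a b v h => hS b a v h) v
  ⟨u, hu.swap⟩

namespace LexProd

variable {V W : Type*} (G : V → V → Prop) (H : W → W → Prop) (x₀ : V)

def layersAndFiber : V × W → V × W → Prop :=
  fun p q => (G p.1 q.1 ∧ p.2 = q.2) ∨ (p.1 = x₀ ∧ q.1 = x₀ ∧ H p.2 q.2)

def crossAndFibers : V × W → V × W → Prop :=
  fun p q => (G p.1 q.1 ∧ p.2 ≠ q.2) ∨ (p.1 = q.1 ∧ p.1 ≠ x₀ ∧ H p.2 q.2)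

variable {G H x₀}

theorem layersAndFiber_le {p q : V × W} (h : layersAndFiber G H x₀ p q) : LexProd G H p q := by
  rcases h with ⟨hG, -⟩ | ⟨hp, hq, hH⟩
  · exact .inl hG
  · exact .inr ⟨hp.trans hq.symm, hH⟩

theorem crossAndFibers_le {p q : V × W} (h : crossAndFibers G H x₀ p q) : LexProd G H p q := by
  rcases h with ⟨hG, -⟩ | ⟨hpq, -, hH⟩
  · exact .inl hG
  · exact .inr ⟨hpq, hH⟩

theorem not_layersAndFiber_and_crossAndFibers (hG : Irreflexive G) (p q : V × W) :
    ¬ (layersAndFiber G H x₀ p q ∧ crossAndFibers G H x₀ p q) := by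
  rintro ⟨⟨hGpq, hpq⟩ | ⟨hp, hq, -⟩, ⟨hGpq', hpq'⟩ | ⟨hpq', hp', -⟩⟩
  · exact hpq' hpq
  · exact hG _ (hpq' ▸ hGpq)
  · exact hG _ ((hp.trans hq.symm) ▸ hGpq')
  · exact hp' hp

theorem isStrong_layersAndFiber (hGs : IsStrong G) (hHs : IsStrong H) :
    IsStrong (layersAndFiber G H x₀) := by
  rintro ⟨x, p⟩ ⟨y, q⟩
  have layer (w : W) {a b : V} (hab : ReflTransGen G a b) :
      ReflTransGen (layersAndFiber G H x₀) (a, w) (b, w) :=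
    hab.lift (·, w) fun _ _ h => .inl ⟨h, rfl⟩
  have fiber : ReflTransGen (layersAndFiber G H x₀) (x₀, p) (x₀, q) :=
    (hHs p q).lift (x₀, ·) fun _ _ h => .inr ⟨rfl, rfl, h⟩
  exact ((layer p (hGs x x₀)).trans fiber).trans (layer q (hGs x₀ y))

theorem isStrong_crossAndFibers [Nontrivial W] {s : V} (hs : s ≠ x₀)
    (hGs : IsStrong G) (hHs : IsStrong H) : IsStrong (crossAndFibers G H x₀) := by
  rintro ⟨x, p⟩ ⟨y, q⟩
  obtain ⟨c, hxs⟩ := (hGs x s).exists_prod_lift_from (S := crossAndFibers G H x₀)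
    (fun _ _ u h => (exists_ne u).imp fun _ hv => .inl ⟨h, hv.symm⟩) p
  obtain ⟨c', hsy⟩ := (hGs s y).exists_prod_lift_to (S := crossAndFibers G H x₀)
    (fun _ _ v h => (exists_ne v).imp fun _ hu => .inl ⟨h, hu⟩) q
  have fiber : ReflTransGen (crossAndFibers G H x₀) (s, c) (s, c') :=
    (hHs c c').lift (s, ·) fun _ _ h => .inr ⟨rfl, hs, h⟩
  exact (hxs.trans fiber).trans hsy

end LexProd

theorem stmt_15_general {V W : Type*} [Nontrivial V] [Nontrivial W]
    (G : V → V → Prop) (H : W → W → Prop)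
    (hG : Irreflexive G)
    (hGs : IsStrong G) (hHs : IsStrong H) :
    GoodDecomp (LexProd G H) := by
  obtain ⟨x₀, s, hs⟩ := exists_pair_ne V
  exact ⟨LexProd.layersAndFiber G H x₀, LexProd.crossAndFibers G H x₀,
    fun _ _ => LexProd.layersAndFiber_le, fun _ _ => LexProd.crossAndFibers_le,
    LexProd.not_layersAndFiber_and_crossAndFibers hG,
    LexProd.isStrong_layersAndFiber hGs hHs, LexProd.isStrong_crossAndFibers hs.symm hGs hHs⟩

theorem stmt_15 {V W : Type*} [Fintype V] [Fintype W] [Nontrivial V] [Nontrivial W]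
    (G : V → V → Prop) (H : W → W → Prop)
    (hG : Irreflexive G) (hH : Irreflexive H)
    (hGs : IsStrong G) (hHs : IsStrong H) :
    GoodDecomp (LexProd G H) :=
  stmt_15_general G H hG hGs hHs
end

section
/- Let G and H be strong digraphs, each of order at least 2. If H contains ℓ ≥ 1 pairwise arc-disjoint strong spanning subdigraphs, then the lexicographic product G ∘ H can be decomposed into ℓ + 1 pairwise arc-disjoint strong spanning subdigraphs. -/
/-!
Fix a vertex `w₀` of `H` and, for each `j`, an out-neighbour `n j` of `w₀` in `B j`; these are
distinct (the `B j` are arc-disjoint) and differ from `w₀` (`H` is loopless). The `j`-th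
subdigraph consists of the copy `G × {n j}` together with `B j` inside every fibre `{x} × W`;
it is strong because one can move inside a fibre to the layer `n j`, follow `G` there, and move
back. The remaining subdigraph takes every arc of `G ∘ H` between distinct fibres except those of
the copies `G × {w}` with `w ≠ w₀`: from any vertex it reaches the layer `w₀` in one step, `G` is
traversed inside that layer, and any vertex is entered from it in one step.
-/

open Function

theorem disjoint_rel_iff {α β : Type*} {A A' : α → β → Prop} :
    Disjoint A A' ↔ ∀ x y, ¬ (A x y ∧ A' x y) := by
  simp only [Pi.disjoint_iff, Prop.disjoint_iff]

theorem Fin.pairwise_cons {α : Type*} {r : α → α → Prop} (hr : ∀ ⦃a b⦄, r a b → r b a)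
    {n : ℕ} {a : α} {f : Fin n → α} (ha : ∀ j, r a (f j)) (hf : Pairwise (r on f)) :
    Pairwise (r on (Fin.cons a f : Fin (n + 1) → α)) := by
  intro i j hij
  induction i using Fin.cases <;> induction j using Fin.cases
  · exact absurd rfl hij
  · exact ha _
  · exact hr (ha _)
  · exact hf fun h => hij (congrArg Fin.succ h)

section IsStrong

variable {V : Type*} [Nontrivial V] {A : V → V → Prop}

theorem IsStrong.exists_out_arc_s16 (h : IsStrong A) (x : V) : ∃ z, A x z := by
  obtain ⟨y, hy⟩ := exists_ne x
  rcases (h x y).cases_head with rfl | ⟨z, hz, -⟩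
  · exact absurd rfl hy
  · exact ⟨z, hz⟩

theorem IsStrong.exists_in_arc_s16 (h : IsStrong A) (y : V) : ∃ z, A z y := by
  obtain ⟨x, hx⟩ := exists_ne y
  rcases (h x y).cases_tail with rfl | ⟨z, -, hz⟩
  · exact absurd rfl hx
  · exact ⟨z, hz⟩

theorem exists_injective_out_arcs {ι : Type*} {B : ι → V → V → Prop}
    (hBs : ∀ i, IsStrong (B i)) (hB : Pairwise (Disjoint on B)) (w : V) :
    ∃ n : ι → V, Injective n ∧ ∀ i, B i w (n i) := by
  choose n hn using fun i => (hBs i).exists_out_arc_s16 w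
  refine ⟨n, fun i j hij => ?_, hn⟩
  by_contra hne
  exact disjoint_rel_iff.mp (hB hne) w (n i) ⟨hn i, hij ▸ hn j⟩

end IsStrong

section LexProd

variable {V W : Type*} {G : V → V → Prop}

def lexBase (G : V → V → Prop) (w₀ : W) : V × W → V × W → Prop :=
  fun p q => G p.1 q.1 ∧ (p.2 = q.2 → p.2 = w₀)

def lexLayer (G : V → V → Prop) (B : W → W → Prop) (w : W) : V × W → V × W → Prop :=
  fun p q => (G p.1 q.1 ∧ p.2 = w ∧ q.2 = w) ∨ (p.1 = q.1 ∧ B p.2 q.2)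

theorem lexBase_le_lexProd (H : W → W → Prop) (w₀ : W) : lexBase G w₀ ≤ LexProd G H :=
  fun _ _ h => Or.inl h.1

theorem lexLayer_le_lexProd {B H : W → W → Prop} (hB : B ≤ H) (w : W) :
    lexLayer G B w ≤ LexProd G H := by
  rintro p q (⟨hG, -, -⟩ | ⟨heq, hpq⟩)
  · exact Or.inl hG
  · exact Or.inr ⟨heq, hB _ _ hpq⟩

theorem isStrong_lexBase [Nontrivial V] (hGs : IsStrong G) (w₀ : W) :
    IsStrong (lexBase G w₀) := by
  rintro ⟨x, u⟩ ⟨y, v⟩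
  obtain ⟨z, hxz⟩ := hGs.exists_out_arc_s16 x
  obtain ⟨z', hz'y⟩ := hGs.exists_in_arc_s16 y
  have hlayer : Relation.ReflTransGen (lexBase G w₀) (z, w₀) (z', w₀) :=
    (hGs z z').lift (fun a => (a, w₀)) fun _ _ h => ⟨h, fun _ => rfl⟩
  exact .head (show lexBase G w₀ (x, u) (z, w₀) from ⟨hxz, id⟩)
    (hlayer.tail ⟨hz'y, fun _ => rfl⟩)

theorem isStrong_lexLayer {B : W → W → Prop} (hGs : IsStrong G) (hBs : IsStrong B) (w : W) :
    IsStrong (lexLayer G B w) := by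
  have hfibre : ∀ x u v, Relation.ReflTransGen (lexLayer G B w) (x, u) (x, v) := fun x u v =>
    (hBs u v).lift (fun b => (x, b)) fun _ _ h => Or.inr ⟨rfl, h⟩
  have hlayer : ∀ x y, Relation.ReflTransGen (lexLayer G B w) (x, w) (y, w) := fun x y =>
    (hGs x y).lift (fun a => (a, w)) fun _ _ h => Or.inl ⟨h, rfl, rfl⟩
  rintro ⟨x, u⟩ ⟨y, v⟩
  exact ((hfibre x u w).trans (hlayer x y)).trans (hfibre y w v)

theorem disjoint_lexBase_lexLayer (hG : ∀ x, ¬ G x x) {B : W → W → Prop} {w₀ w : W}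
    (hw : w ≠ w₀) : Disjoint (lexBase G w₀) (lexLayer G B w) := by
  refine disjoint_rel_iff.mpr ?_
  rintro p q ⟨⟨hpq, hlayer⟩, ⟨-, hp, hq⟩ | ⟨heq, -⟩⟩
  · exact hw (hp ▸ hlayer (hp.trans hq.symm))
  · exact hG _ (heq ▸ hpq)

theorem disjoint_lexLayer (hG : ∀ x, ¬ G x x) {B B' : W → W → Prop} {w w' : W}
    (hw : w ≠ w') (hB : Disjoint B B') : Disjoint (lexLayer G B w) (lexLayer G B' w') := by
  refine disjoint_rel_iff.mpr ?_
  rintro p q ⟨⟨hpq, hp, -⟩ | ⟨heq, hB₁⟩, ⟨hpq', hp', -⟩ | ⟨heq', hB₂⟩⟩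
  · exact hw (hp.symm.trans hp')
  · exact hG _ (heq' ▸ hpq)
  · exact hG _ (heq ▸ hpq')
  · exact disjoint_rel_iff.mp hB _ _ ⟨hB₁, hB₂⟩

end LexProd

theorem stmt_16_general {V W : Type*} [Nontrivial V] [Nontrivial W]
    (G : V → V → Prop) (H : W → W → Prop)
    (hG : Irreflexive G) (hH : Irreflexive H)
    (hGs : IsStrong G)
    (ℓ : ℕ)
    (B : Fin ℓ → (W → W → Prop))
    (hBsub : ∀ i x y, B i x y → H x y)
    (hBdisj : ∀ i j, i ≠ j → ∀ x y, ¬ (B i x y ∧ B j x y))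
    (hBs : ∀ i, IsStrong (B i)) :
    ∃ C : Fin (ℓ + 1) → (V × W → V × W → Prop),
      (∀ i x y, C i x y → LexProd G H x y) ∧
      (∀ i j, i ≠ j → ∀ x y, ¬ (C i x y ∧ C j x y)) ∧
      (∀ i, IsStrong (C i)) := by
  obtain ⟨w₀⟩ := (inferInstance : Nonempty W)
  have hBdisj' : Pairwise (Disjoint on B) := fun i j hij => disjoint_rel_iff.mpr (hBdisj i j hij)
  obtain ⟨n, hn_inj, hn⟩ := exists_injective_out_arcs hBs hBdisj' w₀
  have hn_ne : ∀ j, n j ≠ w₀ := fun j h => hH w₀ (h ▸ hBsub j w₀ (n j) (hn j))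
  have hCdisj : Pairwise (Disjoint on
      (Fin.cons (lexBase G w₀) fun j => lexLayer G (B j) (n j) : Fin (ℓ + 1) → _)) :=
    Fin.pairwise_cons (fun _ _ h => h.symm)
      (fun j => disjoint_lexBase_lexLayer hG (hn_ne j))
      (fun i j hij => disjoint_lexLayer hG (hn_inj.ne hij) (hBdisj' hij))
  refine ⟨_, ?_, fun i j hij => disjoint_rel_iff.mp (hCdisj hij), ?_⟩
  · exact Fin.cases (lexBase_le_lexProd H w₀) fun j => lexLayer_le_lexProd (hBsub j) (n j)
  · exact Fin.cases (isStrong_lexBase hGs w₀) fun j => isStrong_lexLayer hGs (hBs j) (n j)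

theorem stmt_16 {V W : Type*} [Fintype V] [Fintype W] [Nontrivial V] [Nontrivial W]
    (G : V → V → Prop) (H : W → W → Prop)
    (hG : Irreflexive G) (hH : Irreflexive H)
    (hGs : IsStrong G) (hHs : IsStrong H)
    (ℓ : ℕ) (hℓ : 1 ≤ ℓ)
    (B : Fin ℓ → (W → W → Prop))
    (hBsub : ∀ i x y, B i x y → H x y)
    (hBdisj : ∀ i j, i ≠ j → ∀ x y, ¬ (B i x y ∧ B j x y))
    (hBs : ∀ i, IsStrong (B i)) :
    ∃ C : Fin (ℓ + 1) → (V × W → V × W → Prop),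
      (∀ i x y, C i x y → LexProd G H x y) ∧
      (∀ i j, i ≠ j → ∀ x y, ¬ (C i x y ∧ C j x y)) ∧
      (∀ i, IsStrong (C i)) :=
  stmt_16_general G H hG hH hGs ℓ B hBsub hBdisj hBs
end

section
/- The digraph S4, obtained from the complete digraph on 4 vertices by deleting the arcs of a directed cycle of length 4, does not have a pair of arc-disjoint strong spanning subdigraphs. -/
/-!
A strong spanning subdigraph must leave every vertex, and `S4` has out-degree two, so two
arc-disjoint strong subdigraphs `A₁`, `A₂` are the graphs of maps `f₁`, `f₂` with
`{f₁ x, f₂ x} = {x + 2, x + 3}` in `ℤ/4`. Strongness also forces every vertex to be entered,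
so each `fᵢ` is a permutation and its displacements `fᵢ x - x` sum to `0` in `ℤ/4`. Four
values in `{2, 3}` with sum `0` are all equal, so one of the `fᵢ` is `x ↦ x + 2`, whose graph
preserves parity and is not strong.
-/

section Strong

variable {V : Type*} {R : V → V → Prop}

theorem IsStrong.exists_arc [Nontrivial V] (h : IsStrong R) (x : V) : ∃ z, R x z := by
  obtain ⟨y, hxy⟩ := exists_ne x
  rcases (h x y).cases_head with rfl | ⟨z, hz, -⟩
  · exact absurd rfl hxy
  · exact ⟨z, hz⟩

theorem IsStrong.surjective_of_functional [Nontrivial V] (h : IsStrong R) {f : V → V}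
    (hf : ∀ x y, R x y → y = f x) : Function.Surjective f := by
  intro y
  obtain ⟨x, hxy⟩ := exists_ne y
  rcases (h x y).cases_tail with rfl | ⟨z, -, hz⟩
  · exact absurd rfl hxy
  · exact ⟨z, (hf z y hz).symm⟩

theorem not_isStrong_of_invariant {β : Type*} (g : V → β) (hg : ∀ x y, R x y → g x = g y)
    {x y : V} (hxy : g x ≠ g y) : ¬ IsStrong R := fun h => by
  refine hxy ?_
  clear hxy
  induction h x y with
  | refl => rfl
  | tail _ hab ih => exact ih.trans (hg _ _ hab)

end Strong

theorem eq_of_disjoint_of_outdeg_le_two {V : Type*} {A A₁ A₂ : V → V → Prop}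
    (hA : ∀ x y z w, A x y → A x z → A x w → y = z ∨ y = w ∨ z = w)
    (h₁ : ∀ x y, A₁ x y → A x y) (h₂ : ∀ x y, A₂ x y → A x y)
    (hdisj : ∀ x y, ¬ (A₁ x y ∧ A₂ x y)) {x y y' z : V}
    (hy : A₁ x y) (hy' : A₁ x y') (hz : A₂ x z) : y = y' := by
  have hyz : y ≠ z := by rintro rfl; exact hdisj x y ⟨hy, hz⟩
  have hy'z : y' ≠ z := by rintro rfl; exact hdisj x y' ⟨hy', hz⟩
  rcases hA x y y' z (h₁ _ _ hy) (h₁ _ _ hy') (h₂ _ _ hz) with h | h | h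
  exacts [h, absurd h hyz, absurd h hy'z]

theorem sum_sub_self_eq_zero {G : Type*} [AddCommGroup G] [Fintype G] {f : G → G}
    (hf : Function.Bijective f) : ∑ x, (f x - x) = 0 := by
  rw [Finset.sum_sub_distrib, sub_eq_zero]
  exact hf.sum_comp id

theorem Fin.forall_eq_two_or_forall_eq_three_of_sum_eq_zero {d : Fin 4 → Fin 4}
    (hd : ∀ x, d x = 2 ∨ d x = 3) (hsum : ∑ x, d x = 0) : (∀ x, d x = 2) ∨ (∀ x, d x = 3) := by
  -- with `k` entries equal to `2`, the sum is `2k + 3(4 - k) ≡ -k (mod 4)`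
  have hvals : ∀ a b c e : Fin 4, (a = 2 ∨ a = 3) → (b = 2 ∨ b = 3) → (c = 2 ∨ c = 3) →
      (e = 2 ∨ e = 3) → a + b + c + e = 0 → (a = 2 ∧ b = 2 ∧ c = 2 ∧ e = 2) ∨
        (a = 3 ∧ b = 3 ∧ c = 3 ∧ e = 3) := by decide
  rw [Fin.sum_univ_four] at hsum
  rcases hvals _ _ _ _ (hd 0) (hd 1) (hd 2) (hd 3) hsum with h | h
  · left; intro x; fin_cases x <;> simp [h]
  · right; intro x; fin_cases x <;> simp [h]

theorem not_isStrong_of_sub_eq_two {R : Fin 4 → Fin 4 → Prop}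
    (hR : ∀ x y, R x y → y - x = 2) : ¬ IsStrong R := by
  have hparity : ∀ x y : Fin 4, y - x = 2 → x.val % 2 = y.val % 2 := by decide
  exact not_isStrong_of_invariant (fun x : Fin 4 => x.val % 2)
    (fun x y hxy => hparity x y (hR x y hxy)) (x := 0) (y := 1) (by decide)

namespace S4Arc

theorem iff_sub : ∀ x y : Fin 4, S4Arc x y ↔ y - x = 2 ∨ y - x = 3 := by
  unfold S4Arc; decide

theorem outdeg_le_two :
    ∀ x y z w : Fin 4, S4Arc x y → S4Arc x z → S4Arc x w → y = z ∨ y = w ∨ z = w := by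
  unfold S4Arc; decide

theorem exists_graph_of_disjoint_isStrong {A₁ A₂ : Fin 4 → Fin 4 → Prop}
    (h₁ : ∀ x y, A₁ x y → S4Arc x y) (h₂ : ∀ x y, A₂ x y → S4Arc x y)
    (hdisj : ∀ x y, ¬ (A₁ x y ∧ A₂ x y)) (hs₁ : IsStrong A₁) (hs₂ : IsStrong A₂) :
    ∃ f : Fin 4 → Fin 4, (∀ x, A₁ x (f x)) ∧ (∀ x y, A₁ x y → y = f x) ∧
      ((∀ x, f x - x = 2) ∨ (∀ x, f x - x = 3)) := by
  choose f hf using hs₁.exists_arc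
  have hgraph : ∀ x y, A₁ x y → y = f x := fun x y hxy => by
    obtain ⟨z, hz⟩ := hs₂.exists_arc x
    exact eq_of_disjoint_of_outdeg_le_two outdeg_le_two h₁ h₂ hdisj hxy (hf x) hz
  have hbij : f.Bijective := (hs₁.surjective_of_functional hgraph).bijective_of_finite
  exact ⟨f, hf, hgraph, Fin.forall_eq_two_or_forall_eq_three_of_sum_eq_zero
    (fun x => (iff_sub _ _).1 (h₁ _ _ (hf x))) (sum_sub_self_eq_zero hbij)⟩

end S4Arc

theorem stmt_18 : ¬ GoodDecomp S4Arc := by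
  rintro ⟨A₁, A₂, h₁, h₂, hdisj, hs₁, hs₂⟩
  obtain ⟨f₁, hf₁, hgraph₁, h₁2 | h₁3⟩ :=
    S4Arc.exists_graph_of_disjoint_isStrong h₁ h₂ hdisj hs₁ hs₂
  · exact not_isStrong_of_sub_eq_two (fun x y hxy => hgraph₁ x y hxy ▸ h₁2 x) hs₁
  obtain ⟨f₂, hf₂, hgraph₂, h₂2 | h₂3⟩ :=
    S4Arc.exists_graph_of_disjoint_isStrong h₂ h₁ (fun x y h => hdisj x y h.symm) hs₂ hs₁
  · exact not_isStrong_of_sub_eq_two (fun x y hxy => hgraph₂ x y hxy ▸ h₂2 x) hs₂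
  have hf₁₂ : f₁ 0 = f₂ 0 := sub_left_injective ((h₁3 0).trans (h₂3 0).symm)
  exact hdisj 0 (f₁ 0) ⟨hf₁ 0, hf₁₂ ▸ hf₂ 0⟩
end
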